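/- arXiv:1612.03164 — 2 statements merged into one kernel-verified Lean document; each statement's English description precedes it below -/
import Mathlib

section
/- Under the hypotheses of the squared-Hellinger subadditivity theorem (P and Q are joint distributions on finitely-valued variables X_1, …, X_n partitioned into blocks S_1, …, S_L with conditioning sets Π_l ⊆ S_1 ∪ ⋯ ∪ S_{l−1} and the common factorization P(x) = P_{S_1}(x_{S_1})·∏_{l≥2} P_{S_l | Π_l}(x_{S_l} | x_{Π_l}), and similarly for Q), if H²(P, Q) ≥ ε for some ε ≥ 0, then there exists some l ∈ {1, …, L} such that H²(P_{S_l ∪ Π_l}, Q_{S_l ∪ Π_l}) ≥ ε / L (with the convention Π_1 = ∅). -/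
/-! If `A` and `B` are conditionally independent given `A ∩ B` under both `P` and `Q`, the
Bhattacharyya coefficient `BC = 1 - H²` of the marginals is supermodular. Over each assignment `π`
of `A ∩ B`, the fibre sums `a, b, c` of `√(pq)` on `A`, `B`, `A ∪ B` and `m = √(p q)(π)` satisfy
`c m = a b` by the factorization and `a, b ≤ m` by Cauchy–Schwarz, hence `a + b ≤ c + m`; summing
over `π` gives `H²_{A∪B} + H²_{A∩B} ≤ H²_A + H²_B`. With `A = S_1 ∪ ⋯ ∪ S_{l-1}` and
`B = S_l ∪ Π_l`, whose intersection is `Π_l`, induction over `l` yields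
`H²(P, Q) ≤ ∑_l H²(P_{S_l ∪ Π_l}, Q_{S_l ∪ Π_l})`, and some summand is at least the average. -/

/-- The squared Hellinger distance `H²(p,q) = 1 - ∑ₖ √(pₖ qₖ)` between two
probability mass functions on a finite type. -/
noncomputable def sqHellinger {α : Type*} [Fintype α] (p q : α → ℝ) : ℝ :=
  1 - ∑ k, Real.sqrt (p k * q k)

open scoped Classical in
/-- The marginal of a joint distribution `P` on coordinates in the finite set `T`. -/
noncomputable def marg {ι : Type*} [Fintype ι] {α : ι → Type*} [∀ i, Fintype (α i)]
    (P : (∀ i, α i) → ℝ) (T : Finset ι) : ((i : T) → α i) → ℝ :=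
  fun y => ∑ x : ∀ i, α i, if (∀ i : T, x i = y i) then P x else 0

open Finset

open scoped Classical

theorem Finset.restrict_surjective {ι : Type*} {α : ι → Type*} [∀ i, Nonempty (α i)]
    (T : Finset ι) : Function.Surjective (T.restrict (π := α)) := fun y =>
  ⟨fun i => if h : i ∈ T then y ⟨i, h⟩ else Classical.arbitrary _, funext fun i => dif_pos i.2⟩

section Marginals

variable {ι : Type*} [Fintype ι] [DecidableEq ι] {α : ι → Type*} [∀ i, Fintype (α i)]

theorem marg_eq_sum_filter (P : (∀ i, α i) → ℝ) (T : Finset ι) (y : (i : T) → α i) :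
    marg P T y = ∑ x with T.restrict x = y, P x := by
  rw [marg, sum_filter]
  -- `marg` sums with the classical `Fintype` instance on `∀ i, α i`
  convert rfl
  exact funext_iff

theorem marg_nonneg {P : (∀ i, α i) → ℝ} (hP0 : ∀ x, 0 ≤ P x) (T : Finset ι)
    (y : (i : T) → α i) : 0 ≤ marg P T y := by
  rw [marg_eq_sum_filter]
  exact sum_nonneg fun x _ => hP0 x

theorem sum_marg (P : (∀ i, α i) → ℝ) (T : Finset ι) : ∑ y, marg P T y = ∑ x, P x := by
  simp only [marg_eq_sum_filter]
  exact sum_fiberwise univ T.restrict P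

theorem sum_marg_restrict₂_eq {T T' : Finset ι} (P : (∀ i, α i) → ℝ) (h : T ⊆ T')
    (π : (i : T) → α i) :
    ∑ y with restrict₂ h y = π, marg P T' y = marg P T π := by
  simp only [marg_eq_sum_filter]
  rw [sum_fiberwise_eq_sum_filter]
  simp only [mem_filter, mem_univ, true_and]
  rfl

theorem marg_univ_restrict (P : (∀ i, α i) → ℝ) (x : ∀ i, α i) :
    marg P univ (univ.restrict x) = P x := by
  rw [marg_eq_sum_filter, sum_eq_single_of_mem x (by simp)]
  rintro x' hx' hne
  exact absurd (funext fun i => congrFun (mem_filter.1 hx').2 ⟨i, mem_univ i⟩) hne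

theorem sqHellinger_marg_univ (P Q : (∀ i, α i) → ℝ) :
    sqHellinger (marg P univ) (marg Q univ) = sqHellinger P Q := by
  let e : (∀ i, α i) ≃ ((i : (univ : Finset ι)) → α i) :=
    ⟨univ.restrict, fun y i => y ⟨i, mem_univ i⟩, fun _ => rfl, fun _ => rfl⟩
  simp only [sqHellinger, ← e.sum_comp, show ⇑e = univ.restrict from rfl, marg_univ_restrict]

end Marginals

theorem sqHellinger_nonneg {β : Type*} [Fintype β] {p q : β → ℝ} (hp0 : ∀ b, 0 ≤ p b)
    (hp1 : ∑ b, p b = 1) (hq0 : ∀ b, 0 ≤ q b) (hq1 : ∑ b, q b = 1) : 0 ≤ sqHellinger p q := by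
  have h := Real.sum_sqrt_mul_sqrt_le univ hp0 hq0
  rw [hp1, hq1, Real.sqrt_one, mul_one] at h
  simpa only [sqHellinger, sub_nonneg, Real.sqrt_mul (hp0 _)] using h

section Gluing

variable {ι : Type*} [DecidableEq ι] {α : ι → Type*} {A B : Finset ι}

def unionGlue (y : (i : A) → α i) (w : (i : B) → α i) : (i : (A ∪ B : Finset ι)) → α i :=
  fun i => if h : i.1 ∈ A then y ⟨i.1, h⟩ else w ⟨i.1, (mem_union.1 i.2).resolve_left h⟩

theorem restrict₂_unionGlue_left (y : (i : A) → α i) (w : (i : B) → α i) :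
    restrict₂ subset_union_left (unionGlue y w) = y :=
  funext fun i => dif_pos i.2

theorem restrict₂_unionGlue_right {y : (i : A) → α i} {w : (i : B) → α i}
    (h : restrict₂ inter_subset_left y = restrict₂ inter_subset_right w) :
    restrict₂ subset_union_right (unionGlue y w) = w := by
  funext i
  by_cases hi : i.1 ∈ A
  · exact (dif_pos hi).trans (congrFun h ⟨i.1, mem_inter.2 ⟨hi, i.2⟩⟩)
  · exact dif_neg hi

theorem unionGlue_restrict₂ (z : (i : (A ∪ B : Finset ι)) → α i) :
    unionGlue (restrict₂ subset_union_left z) (restrict₂ subset_union_right z) = z := by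
  funext i
  by_cases hi : i.1 ∈ A
  · exact dif_pos hi
  · exact dif_neg hi

variable [∀ i, Fintype (α i)]

theorem sum_restrict₂_union_mul (π : (i : (A ∩ B : Finset ι)) → α i)
    (F : ((i : A) → α i) → ℝ) (G : ((i : B) → α i) → ℝ) :
    ∑ z with restrict₂ inter_subset_union z = π,
        F (restrict₂ subset_union_left z) * G (restrict₂ subset_union_right z) =
      (∑ y with restrict₂ inter_subset_left y = π, F y) *
        ∑ w with restrict₂ inter_subset_right w = π, G w := by
  rw [sum_mul_sum, ← sum_product']
  refine sum_nbij' (fun z => (restrict₂ subset_union_left z, restrict₂ subset_union_right z))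
    (fun p => unionGlue p.1 p.2) ?_ ?_ (fun z _ => unionGlue_restrict₂ z) ?_ (fun _ _ => rfl)
  · intro z hz
    simp only [mem_product, mem_filter, mem_univ, true_and] at hz ⊢
    exact ⟨hz, hz⟩
  · rintro ⟨y, w⟩ hyw
    simp only [mem_product, mem_filter, mem_univ, true_and] at hyw ⊢
    exact (congrArg (restrict₂ inter_subset_left) (restrict₂_unionGlue_left y w)).trans hyw.1
  · rintro ⟨y, w⟩ hyw
    simp only [mem_product, mem_filter, mem_univ, true_and] at hyw
    exact Prod.ext (restrict₂_unionGlue_left y w)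
      (restrict₂_unionGlue_right (hyw.1.trans hyw.2.symm))

end Gluing

theorem add_sub_le_of_mul_eq_mul {a b c m : ℝ} (ha : 0 ≤ a) (hc : 0 ≤ c)
    (ham : a ≤ m) (hbm : b ≤ m) (h : c * m = a * b) : a + b - m ≤ c := by
  rcases (ha.trans ham).eq_or_lt with hm | hm
  · linarith
  · nlinarith [mul_nonneg (sub_nonneg.2 ham) (sub_nonneg.2 hbm)]

section Bhattacharyya

variable {ι : Type*} [Fintype ι] [DecidableEq ι] {α : ι → Type*} [∀ i, Fintype (α i)]

def CondIndepOnInter (P : (∀ i, α i) → ℝ) (A B : Finset ι) : Prop :=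
  ∀ x : ∀ i, α i, marg P (A ∪ B) (fun i => x i.1) * marg P (A ∩ B) (fun i => x i.1) =
    marg P A (fun i => x i.1) * marg P B (fun i => x i.1)

theorem CondIndepOnInter.marg_mul_marg [∀ i, Nonempty (α i)] {P : (∀ i, α i) → ℝ}
    {A B : Finset ι} (hP : CondIndepOnInter P A B) (z : (i : (A ∪ B : Finset ι)) → α i) :
    marg P (A ∪ B) z * marg P (A ∩ B) (restrict₂ inter_subset_union z) =
      marg P A (restrict₂ subset_union_left z) * marg P B (restrict₂ subset_union_right z) := by
  obtain ⟨x, rfl⟩ := (A ∪ B).restrict_surjective z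
  exact hP x

noncomputable def bhattacharyyaFiber (P Q : (∀ i, α i) → ℝ) {T T' : Finset ι} (h : T ⊆ T')
    (π : (i : T) → α i) : ℝ :=
  ∑ y with restrict₂ h y = π, √(marg P T' y * marg Q T' y)

variable {P Q : (∀ i, α i) → ℝ} {T T' : Finset ι}

theorem bhattacharyyaFiber_nonneg (h : T ⊆ T') (π : (i : T) → α i) :
    0 ≤ bhattacharyyaFiber P Q h π :=
  sum_nonneg fun _ _ => Real.sqrt_nonneg _

theorem sum_bhattacharyyaFiber (h : T ⊆ T') :
    ∑ π, bhattacharyyaFiber P Q h π = ∑ y, √(marg P T' y * marg Q T' y) :=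
  sum_fiberwise univ _ _

theorem bhattacharyyaFiber_le (hP0 : ∀ x, 0 ≤ P x) (hQ0 : ∀ x, 0 ≤ Q x) (h : T ⊆ T')
    (π : (i : T) → α i) :
    bhattacharyyaFiber P Q h π ≤ √(marg P T π * marg Q T π) := by
  have hcs := Real.sum_sqrt_mul_sqrt_le (univ.filter fun y => restrict₂ h y = π)
    (marg_nonneg hP0 T') (marg_nonneg hQ0 T')
  rw [sum_marg_restrict₂_eq, sum_marg_restrict₂_eq] at hcs
  simpa only [bhattacharyyaFiber, Real.sqrt_mul (marg_nonneg hP0 _ _)] using hcs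

theorem bhattacharyyaFiber_union_mul [∀ i, Nonempty (α i)] (hP0 : ∀ x, 0 ≤ P x)
    (hQ0 : ∀ x, 0 ≤ Q x) {A B : Finset ι} (hP : CondIndepOnInter P A B)
    (hQ : CondIndepOnInter Q A B) (π : (i : (A ∩ B : Finset ι)) → α i) :
    bhattacharyyaFiber P Q inter_subset_union π *
        √(marg P (A ∩ B) π * marg Q (A ∩ B) π) =
      bhattacharyyaFiber P Q inter_subset_left π * bhattacharyyaFiber P Q inter_subset_right π := by
  rw [bhattacharyyaFiber, sum_mul, bhattacharyyaFiber, bhattacharyyaFiber,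
    ← sum_restrict₂_union_mul]
  refine sum_congr rfl fun z hz => ?_
  rw [← (mem_filter.1 hz).2, ← Real.sqrt_mul (mul_nonneg (marg_nonneg hP0 _ _)
    (marg_nonneg hQ0 _ _)), mul_mul_mul_comm, hP.marg_mul_marg, hQ.marg_mul_marg,
    mul_mul_mul_comm, Real.sqrt_mul (mul_nonneg (marg_nonneg hP0 _ _) (marg_nonneg hQ0 _ _))]

theorem sqHellinger_marg_union_add_inter_le [∀ i, Nonempty (α i)] (hP0 : ∀ x, 0 ≤ P x)
    (hQ0 : ∀ x, 0 ≤ Q x) {A B : Finset ι} (hP : CondIndepOnInter P A B)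
    (hQ : CondIndepOnInter Q A B) :
    sqHellinger (marg P (A ∪ B)) (marg Q (A ∪ B)) + sqHellinger (marg P (A ∩ B)) (marg Q (A ∩ B))
      ≤ sqHellinger (marg P A) (marg Q A) + sqHellinger (marg P B) (marg Q B) := by
  have hfiber : ∀ π : (i : (A ∩ B : Finset ι)) → α i,
      bhattacharyyaFiber P Q inter_subset_left π + bhattacharyyaFiber P Q inter_subset_right π -
          √(marg P (A ∩ B) π * marg Q (A ∩ B) π) ≤
        bhattacharyyaFiber P Q inter_subset_union π := fun π =>
    add_sub_le_of_mul_eq_mul (bhattacharyyaFiber_nonneg _ π) (bhattacharyyaFiber_nonneg _ π)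
      (bhattacharyyaFiber_le hP0 hQ0 _ π) (bhattacharyyaFiber_le hP0 hQ0 _ π)
      (bhattacharyyaFiber_union_mul hP0 hQ0 hP hQ π)
  have hsum := sum_le_sum fun π (_ : π ∈ univ) => hfiber π
  rw [sum_sub_distrib, sum_add_distrib, sum_bhattacharyyaFiber, sum_bhattacharyyaFiber,
    sum_bhattacharyyaFiber] at hsum
  simp only [sqHellinger]
  linarith

end Bhattacharyya

section Blocks

variable {ι : Type*} [DecidableEq ι] {L : ℕ} {S Par : Fin L → Finset ι} {l : Fin L}

theorem biUnion_filter_lt_union_eq (hPar : Par l ⊆ (univ.filter (fun j => j < l)).biUnion S) :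
    (univ.filter (fun j => j < l)).biUnion S ∪ (S l ∪ Par l) =
      (univ.filter (fun j => j ≤ l)).biUnion S := by
  rw [union_left_comm, union_eq_left.2 hPar, filter_gt_eq_Iio, filter_ge_eq_Iic, ← Iio_insert,
    biUnion_insert]

theorem biUnion_filter_lt_inter_eq (hdisj : ∀ l l' : Fin L, l ≠ l' → Disjoint (S l) (S l'))
    (hPar : Par l ⊆ (univ.filter (fun j => j < l)).biUnion S) :
    (univ.filter (fun j => j < l)).biUnion S ∩ (S l ∪ Par l) = Par l := by
  have hS : Disjoint ((univ.filter (fun j => j < l)).biUnion S) (S l) :=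
    (disjoint_biUnion_left _ _ _).2 fun j hj => hdisj j l (mem_filter.1 hj).2.ne
  rw [inter_union_distrib_left, disjoint_iff_inter_eq_empty.1 hS, empty_union,
    inter_eq_right.2 hPar]

theorem par_eq_empty_of_val_eq_zero (hPar : Par l ⊆ (univ.filter (fun j => j < l)).biUnion S)
    (hl : l.val = 0) : Par l = ∅ := by
  refine subset_empty.1 (hPar.trans (subset_empty.2 ?_))
  simp [Fin.lt_def, hl]

end Blocks

section Chain

variable {ι : Type*} [Fintype ι] [DecidableEq ι] {α : ι → Type*} [∀ i, Fintype (α i)]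
  {L : ℕ} {S Par : Fin L → Finset ι} {P Q : (∀ i, α i) → ℝ}

theorem sqHellinger_marg_biUnion_le_add (hdisj : ∀ l l' : Fin L, l ≠ l' → Disjoint (S l) (S l'))
    {l : Fin L} (hPar : Par l ⊆ (univ.filter (fun j => j < l)).biUnion S)
    (hP0 : ∀ x, 0 ≤ P x) (hP1 : ∑ x, P x = 1) (hQ0 : ∀ x, 0 ≤ Q x) (hQ1 : ∑ x, Q x = 1)
    (hPfac : ∀ x : ∀ i, α i,
      marg P ((univ.filter (fun j => j ≤ l)).biUnion S) (fun i => x i.1) *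
          marg P (Par l) (fun i => x i.1) =
        marg P ((univ.filter (fun j => j < l)).biUnion S) (fun i => x i.1) *
          marg P (S l ∪ Par l) (fun i => x i.1))
    (hQfac : ∀ x : ∀ i, α i,
      marg Q ((univ.filter (fun j => j ≤ l)).biUnion S) (fun i => x i.1) *
          marg Q (Par l) (fun i => x i.1) =
        marg Q ((univ.filter (fun j => j < l)).biUnion S) (fun i => x i.1) *
          marg Q (S l ∪ Par l) (fun i => x i.1)) :
    sqHellinger (marg P ((univ.filter (fun j => j ≤ l)).biUnion S))
        (marg Q ((univ.filter (fun j => j ≤ l)).biUnion S)) ≤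
      sqHellinger (marg P ((univ.filter (fun j => j < l)).biUnion S))
          (marg Q ((univ.filter (fun j => j < l)).biUnion S)) +
        sqHellinger (marg P (S l ∪ Par l)) (marg Q (S l ∪ Par l)) := by
  obtain ⟨x₀⟩ : Nonempty (∀ i, α i) :=
    univ_nonempty_iff.1 (nonempty_of_sum_ne_zero (hP1 ▸ one_ne_zero))
  have : ∀ i, Nonempty (α i) := fun i => ⟨x₀ i⟩
  have hunion := biUnion_filter_lt_union_eq hPar
  have hinter := biUnion_filter_lt_inter_eq hdisj hPar
  have hP : CondIndepOnInter P ((univ.filter (fun j => j < l)).biUnion S) (S l ∪ Par l) := by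
    rw [CondIndepOnInter, hunion, hinter]
    exact hPfac
  have hQ : CondIndepOnInter Q ((univ.filter (fun j => j < l)).biUnion S) (S l ∪ Par l) := by
    rw [CondIndepOnInter, hunion, hinter]
    exact hQfac
  have hsub := sqHellinger_marg_union_add_inter_le hP0 hQ0 hP hQ
  rw [hunion, hinter] at hsub
  have hpar := sqHellinger_nonneg (marg_nonneg hP0 (Par l)) (by rw [sum_marg, hP1])
    (marg_nonneg hQ0 (Par l)) (by rw [sum_marg, hQ1])
  linarith

theorem sqHellinger_marg_biUnion_le_sum {S Par : Fin (L + 1) → Finset ι}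
    (hdisj : ∀ l l' : Fin (L + 1), l ≠ l' → Disjoint (S l) (S l'))
    (hPar : ∀ l : Fin (L + 1), Par l ⊆ (univ.filter (fun j => j < l)).biUnion S)
    (hP0 : ∀ x, 0 ≤ P x) (hP1 : ∑ x, P x = 1) (hQ0 : ∀ x, 0 ≤ Q x) (hQ1 : ∑ x, Q x = 1)
    (hPfac : ∀ l : Fin (L + 1), 0 < l.val → ∀ x : ∀ i, α i,
      marg P ((univ.filter (fun j => j ≤ l)).biUnion S) (fun i => x i.1) *
          marg P (Par l) (fun i => x i.1) =
        marg P ((univ.filter (fun j => j < l)).biUnion S) (fun i => x i.1) *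
          marg P (S l ∪ Par l) (fun i => x i.1))
    (hQfac : ∀ l : Fin (L + 1), 0 < l.val → ∀ x : ∀ i, α i,
      marg Q ((univ.filter (fun j => j ≤ l)).biUnion S) (fun i => x i.1) *
          marg Q (Par l) (fun i => x i.1) =
        marg Q ((univ.filter (fun j => j < l)).biUnion S) (fun i => x i.1) *
          marg Q (S l ∪ Par l) (fun i => x i.1))
    (l : Fin (L + 1)) :
    sqHellinger (marg P ((univ.filter (fun j => j ≤ l)).biUnion S))
        (marg Q ((univ.filter (fun j => j ≤ l)).biUnion S)) ≤
      ∑ j ∈ univ.filter (fun j => j ≤ l),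
        sqHellinger (marg P (S j ∪ Par j)) (marg Q (S j ∪ Par j)) := by
  induction l using Fin.induction with
  | zero =>
    have h0 : univ.filter (fun j : Fin (L + 1) => j ≤ 0) = {0} := by
      ext j
      simp
    rw [h0, singleton_biUnion, sum_singleton, par_eq_empty_of_val_eq_zero (hPar 0) rfl,
      union_empty]
  | succ i ih =>
    have hlt : univ.filter (fun j => j < i.succ) = univ.filter (fun j => j ≤ i.castSucc) := by
      ext j
      simp [Fin.le_castSucc_iff]
    have hle : univ.filter (fun j => j ≤ i.succ) =
        insert i.succ (univ.filter (fun j => j ≤ i.castSucc)) := by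
      rw [filter_ge_eq_Iic, ← Iio_insert, ← filter_gt_eq_Iio, hlt]
    have hstep := sqHellinger_marg_biUnion_le_add hdisj (hPar i.succ) hP0 hP1 hQ0 hQ1
      (hPfac i.succ i.succ_pos) (hQfac i.succ i.succ_pos)
    rw [hlt] at hstep
    calc _ ≤ _ := hstep
      _ ≤ _ := add_le_add_left ih _
      _ = _ := by rw [hle, sum_insert (by simp), add_comm]

end Chain

theorem sqHellinger_localization_general
    {n L : ℕ} (hL : 0 < L) (α : Fin n → Type*) [∀ i, Fintype (α i)]
    (S : Fin L → Finset (Fin n))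
    (hdisj : ∀ l l' : Fin L, l ≠ l' → Disjoint (S l) (S l'))
    (hcover : Finset.univ.biUnion S = (Finset.univ : Finset (Fin n)))
    (Par : Fin L → Finset (Fin n))
    (hPar : ∀ l : Fin L, Par l ⊆ (Finset.univ.filter (fun j => j < l)).biUnion S)
    (P Q : (∀ i, α i) → ℝ)
    (hP0 : ∀ x, 0 ≤ P x) (hP1 : ∑ x, P x = 1)
    (hQ0 : ∀ x, 0 ≤ Q x) (hQ1 : ∑ x, Q x = 1)
    (hPfac : ∀ l : Fin L, 0 < l.val → ∀ x : ∀ i, α i,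
      marg P ((Finset.univ.filter (fun j => j ≤ l)).biUnion S) (fun i => x i.1) *
          marg P (Par l) (fun i => x i.1) =
        marg P ((Finset.univ.filter (fun j => j < l)).biUnion S) (fun i => x i.1) *
          marg P (S l ∪ Par l) (fun i => x i.1))
    (hQfac : ∀ l : Fin L, 0 < l.val → ∀ x : ∀ i, α i,
      marg Q ((Finset.univ.filter (fun j => j ≤ l)).biUnion S) (fun i => x i.1) *
          marg Q (Par l) (fun i => x i.1) =
        marg Q ((Finset.univ.filter (fun j => j < l)).biUnion S) (fun i => x i.1) *
          marg Q (S l ∪ Par l) (fun i => x i.1))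
    (ε : ℝ) (hPQ : sqHellinger P Q ≥ ε) :
    ∃ l : Fin L,
      sqHellinger (marg P (S l ∪ Par l)) (marg Q (S l ∪ Par l)) ≥ ε / L := by
  obtain ⟨L, rfl⟩ := Nat.exists_eq_add_one_of_ne_zero hL.ne'
  have hchain := sqHellinger_marg_biUnion_le_sum hdisj hPar hP0 hP1 hQ0 hQ1 hPfac hQfac
    (Fin.last L)
  rw [filter_true_of_mem fun j _ => Fin.le_last j, hcover, sqHellinger_marg_univ] at hchain
  have hsum : ∑ _ : Fin (L + 1), ε / (L + 1 : ℕ) ≤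
      ∑ l, sqHellinger (marg P (S l ∪ Par l)) (marg Q (S l ∪ Par l)) := by
    rw [sum_const, card_univ, Fintype.card_fin, nsmul_eq_mul,
      mul_div_cancel₀ _ (Nat.cast_ne_zero.2 hL.ne')]
    linarith
  obtain ⟨l, -, hl⟩ := exists_le_of_sum_le univ_nonempty hsum
  exact ⟨l, hl⟩

/-- **Localization.**
Variables `X_1, …, X_n` (with finite value types `α i`) are partitioned into disjoint
blocks `S 0, …, S (L-1)`, and for each `l` the conditioning set `Par l` is contained in
`S 0 ∪ ⋯ ∪ S (l-1)`.  If `P` and `Q` are joint distributions admitting the common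
factorization — expressed equivalently by the pointwise conditional-independence
identity: for each `l ≥ 2` (i.e. `0 < l.val`), the marginal on `S 0 ∪ ⋯ ∪ S l` times
the marginal on `Par l` equals the marginal on `S 0 ∪ ⋯ ∪ S (l-1)` times the marginal
on `S l ∪ Par l` — then
and if moreover `H²(P,Q) ≥ ε` for some `ε ≥ 0`, then some block satisfies
`H²(P_{S l ∪ Par l}, Q_{S l ∪ Par l}) ≥ ε / L`
(where `Par 0 = ∅` is forced, so the `l = 0` marginal set is just `S 0`). -/
theorem sqHellinger_localization
    {n L : ℕ} (hL : 0 < L) (α : Fin n → Type*) [∀ i, Fintype (α i)]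
    (S : Fin L → Finset (Fin n))
    (hdisj : ∀ l l' : Fin L, l ≠ l' → Disjoint (S l) (S l'))
    (hcover : Finset.univ.biUnion S = (Finset.univ : Finset (Fin n)))
    (Par : Fin L → Finset (Fin n))
    (hPar : ∀ l : Fin L, Par l ⊆ (Finset.univ.filter (fun j => j < l)).biUnion S)
    (P Q : (∀ i, α i) → ℝ)
    (hP0 : ∀ x, 0 ≤ P x) (hP1 : ∑ x, P x = 1)
    (hQ0 : ∀ x, 0 ≤ Q x) (hQ1 : ∑ x, Q x = 1)
    (hPfac : ∀ l : Fin L, 0 < l.val → ∀ x : ∀ i, α i,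
      marg P ((Finset.univ.filter (fun j => j ≤ l)).biUnion S) (fun i => x i.1) *
          marg P (Par l) (fun i => x i.1) =
        marg P ((Finset.univ.filter (fun j => j < l)).biUnion S) (fun i => x i.1) *
          marg P (S l ∪ Par l) (fun i => x i.1))
    (hQfac : ∀ l : Fin L, 0 < l.val → ∀ x : ∀ i, α i,
      marg Q ((Finset.univ.filter (fun j => j ≤ l)).biUnion S) (fun i => x i.1) *
          marg Q (Par l) (fun i => x i.1) =
        marg Q ((Finset.univ.filter (fun j => j < l)).biUnion S) (fun i => x i.1) *
          marg Q (S l ∪ Par l) (fun i => x i.1))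
    (ε : ℝ) (hε : 0 ≤ ε) (hPQ : sqHellinger P Q ≥ ε) :
    ∃ l : Fin L,
      sqHellinger (marg P (S l ∪ Par l)) (marg Q (S l ∪ Par l)) ≥ ε / L :=
  sqHellinger_localization_general hL α S hdisj hcover Par hPar P Q hP0 hP1 hQ0 hQ1 hPfac hQfac ε
    hPQ
end

section
/- Suppose P and Q are joint distributions on finitely-valued variables X_1, …, X_n with a common Bayesian network structure on a DAG whose nodes are topologically ordered, where Π_i ⊆ {1, …, i−1} is the set of parents of node i, and P(x) = P_{X_1}(x_1)·∏_{i=2}^{n} P_{X_i | X_{Π_i}}(x_i | x_{Π_i}), Q(x) = Q_{X_1}(x_1)·∏_{i=2}^{n} Q_{X_i | X_{Π_i}}(x_i | x_{Π_i}). Then H²(P, Q) ≤ H²(P_{X_1}, Q_{X_1}) + Σ_{i=2}^{n} H²(P_{X_i, X_{Π_i}}, Q_{X_i, X_{Π_i}}); in particular, if H²(P, Q) ≥ ε then there exists i with H²(P_{X_i, X_{Π_i}}, Q_{X_i, X_{Π_i}}) ≥ ε/n. -/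
section BNAux
open scoped Classical
variable {ι : Type*} [Fintype ι] [DecidableEq ι] {α : ι → Type*} [∀ i, Fintype (α i)]

lemma BN.sum_univ_eq {β : Type*} (inst1 inst2 : Fintype β) (f g : β → ℝ)
    (h : ∀ b, f b = g b) :
    @Finset.sum β ℝ _ (@Finset.univ β inst1) f = @Finset.sum β ℝ _ (@Finset.univ β inst2) g := by
  obtain rfl : inst1 = inst2 := Subsingleton.elim _ _
  exact Finset.sum_congr rfl fun b _ => h b

noncomputable def BN.MF (P : (∀ i, α i) → ℝ) (T : Finset ι) : (∀ i, α i) → ℝ :=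
  fun x => marg P T (fun j => x j.1)

lemma BN.MF_apply (P : (∀ i, α i) → ℝ) (T : Finset ι) (x : ∀ i, α i) :
    BN.MF P T x = ∑ z : ∀ i, α i, if (∀ j ∈ T, z j = x j) then P z else 0 := by
  simp only [BN.MF, marg]
  refine BN.sum_univ_eq _ _ _ _ fun z => if_congr ?_ rfl rfl
  exact ⟨fun h j hj => h ⟨j, hj⟩, fun h j => h j.1 j.2⟩

lemma BN.MF_nonneg {P : (∀ i, α i) → ℝ} (hP0 : ∀ x, 0 ≤ P x) (T : Finset ι) (x : ∀ i, α i) :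
    0 ≤ BN.MF P T x := by
  rw [BN.MF_apply]
  refine Finset.sum_nonneg fun z _ => ?_
  split <;> simp [hP0]

lemma BN.MF_congr {P : (∀ i, α i) → ℝ} {T : Finset ι} {x y : ∀ i, α i}
    (h : ∀ j ∈ T, x j = y j) : BN.MF P T x = BN.MF P T y := by
  simp only [BN.MF]
  congr 1
  funext j
  exact h j.1 j.2

noncomputable def BN.Sec (x₀ : ∀ i, α i) (T : Finset ι) : Finset (∀ i, α i) :=
  Finset.univ.filter (fun x => ∀ j ∉ T, x j = x₀ j)

lemma BN.mem_Sec {x₀ : ∀ i, α i} {T : Finset ι} {x : ∀ i, α i} :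
    x ∈ BN.Sec x₀ T ↔ ∀ j ∉ T, x j = x₀ j := by simp [BN.Sec]

noncomputable def BN.reset (x₀ : ∀ i, α i) (T : Finset ι) (z : ∀ i, α i) : ∀ i, α i :=
  fun j => if j ∈ T then z j else x₀ j

lemma BN.reset_mem_Sec (x₀ : ∀ i, α i) (T : Finset ι) (z : ∀ i, α i) :
    BN.reset x₀ T z ∈ BN.Sec x₀ T := by
  rw [BN.mem_Sec]
  intro j hj
  simp [BN.reset, hj]

lemma BN.sum_MF_fiber (P : (∀ i, α i) → ℝ) (x₀ : ∀ i, α i) {R T : Finset ι} (hRT : R ⊆ T)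
    (w : ∀ i, α i) :
    ∑ x ∈ (BN.Sec x₀ T).filter (fun x => ∀ j ∈ R, x j = w j), BN.MF P T x = BN.MF P R w := by
  rw [Finset.sum_filter]
  have step1 : ∀ x ∈ BN.Sec x₀ T,
      (if (∀ j ∈ R, x j = w j) then BN.MF P T x else 0)
        = ∑ z : ∀ i, α i, if ((∀ j ∈ R, x j = w j) ∧ ∀ j ∈ T, z j = x j) then P z else 0 := by
    intro x _
    rw [BN.MF_apply]
    split
    · refine Finset.sum_congr rfl fun z _ => if_congr ?_ rfl rfl
      tauto
    · rw [eq_comm]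
      refine Finset.sum_eq_zero fun z _ => ?_
      rw [if_neg]
      tauto
  rw [Finset.sum_congr rfl step1, Finset.sum_comm]
  rw [BN.MF_apply]
  refine Finset.sum_congr rfl fun z _ => ?_
  rw [Finset.sum_eq_single_of_mem (BN.reset x₀ T z) (BN.reset_mem_Sec x₀ T z)]
  · have h2 : ∀ j ∈ T, z j = BN.reset x₀ T z j := by
      intro j hj; simp [BN.reset, hj]
    refine if_congr ⟨?_, ?_⟩ rfl rfl
    · rintro ⟨h1, _⟩ j hj
      have := h1 j hj
      simpa [BN.reset, hRT hj] using this
    · intro h1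
      refine ⟨fun j hj => ?_, h2⟩
      simp [BN.reset, hRT hj, h1 j hj]
  · intro x hx hne
    rw [if_neg]
    rintro ⟨-, h2⟩
    apply hne
    funext j
    by_cases hj : j ∈ T
    · simp [BN.reset, hj, (h2 j hj).symm]
    · simp [BN.reset, hj, BN.mem_Sec.1 hx j hj]

lemma BN.sum_fiber_decomp (x₀ : ∀ i, α i) {R T : Finset ι} (hRT : R ⊆ T)
    (h : (∀ i, α i) → ℝ) :
    ∑ x ∈ BN.Sec x₀ T, h x
      = ∑ w ∈ BN.Sec x₀ R, ∑ x ∈ (BN.Sec x₀ T).filter (fun x => ∀ j ∈ R, x j = w j), h x := by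
  rw [← Finset.sum_fiberwise_of_maps_to (g := BN.reset x₀ R) (t := BN.Sec x₀ R)
    (fun x _ => BN.reset_mem_Sec x₀ R x) h]
  refine Finset.sum_congr rfl fun w hw => ?_
  refine Finset.sum_congr (Finset.filter_congr fun x hx => ?_) fun _ _ => rfl
  constructor
  · intro he j hj
    rw [← he]
    simp [BN.reset, hj]
  · intro he
    funext j
    by_cases hj : j ∈ R
    · simp [BN.reset, hj, he j hj]
    · simp only [BN.reset, if_neg hj]
      exact (BN.mem_Sec.1 hw j hj).symm

lemma BN.sum_MF_Sec (P : (∀ i, α i) → ℝ) (x₀ : ∀ i, α i) (R : Finset ι) :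
    ∑ w ∈ BN.Sec x₀ R, BN.MF P R w = ∑ z, P z := by
  have h := BN.sum_MF_fiber P x₀ (R := (∅ : Finset ι)) (T := R) (Finset.empty_subset R) x₀
  rw [Finset.filter_true_of_mem (fun x _ => fun j hj => absurd hj (Finset.notMem_empty j))] at h
  rw [h, BN.MF_apply]
  simp

lemma BN.sum_sqrt_mul_le {β : Type*} (s : Finset β) (a b : β → ℝ) (ha : ∀ k ∈ s, 0 ≤ a k)
    (hb : ∀ k ∈ s, 0 ≤ b k) :
    ∑ k ∈ s, Real.sqrt (a k * b k)
      ≤ Real.sqrt (∑ k ∈ s, a k) * Real.sqrt (∑ k ∈ s, b k) := by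
  have h := Finset.sum_sq_le_sum_mul_sum_of_sq_eq_mul s
    (r := fun k => Real.sqrt (a k * b k)) (f := a) (g := b) ha hb
    (fun k hk => Real.sq_sqrt (mul_nonneg (ha k hk) (hb k hk)))
  have h0 : 0 ≤ ∑ k ∈ s, Real.sqrt (a k * b k) :=
    Finset.sum_nonneg fun k _ => Real.sqrt_nonneg _
  calc ∑ k ∈ s, Real.sqrt (a k * b k)
      = Real.sqrt ((∑ k ∈ s, Real.sqrt (a k * b k)) ^ 2) := (Real.sqrt_sq h0).symm
    _ ≤ Real.sqrt ((∑ k ∈ s, a k) * ∑ k ∈ s, b k) := Real.sqrt_le_sqrt h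
    _ = _ := Real.sqrt_mul (Finset.sum_nonneg ha) _

lemma BN.key_ineq {F f g r : ℝ} (hF : 0 ≤ F) (hf : 0 ≤ f) (hg : 0 ≤ g)
    (hfr : f ≤ r) (hgr : g ≤ r) (h : F * r = f * g) : f + g - r ≤ F := by
  rcases (hf.trans hfr).eq_or_lt with h0 | h0
  · have hf0 : f = 0 := le_antisymm (h0 ▸ hfr) hf
    have hg0 : g = 0 := le_antisymm (h0 ▸ hgr) hg
    rw [hf0, hg0, ← h0]
    linarith
  · nlinarith [mul_nonneg (sub_nonneg.2 hfr) (sub_nonneg.2 hgr)]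

end BNAux

section BNStep
open scoped Classical
variable {ι : Type*} [Fintype ι] [DecidableEq ι] {α : ι → Type*} [∀ i, Fintype (α i)]

lemma BN.step (P Q : (∀ i, α i) → ℝ) (hP0 : ∀ x, 0 ≤ P x) (hQ0 : ∀ x, 0 ≤ Q x)
    (hP1 : ∑ x, P x = 1) (hQ1 : ∑ x, Q x = 1) (x₀ : ∀ i, α i)
    {i : ι} {T' R : Finset ι} (hiT' : i ∉ T') (hRT' : R ⊆ T')
    (hPf : ∀ x, BN.MF P (insert i T') x * BN.MF P R x
      = BN.MF P T' x * BN.MF P (insert i R) x)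
    (hQf : ∀ x, BN.MF Q (insert i T') x * BN.MF Q R x
      = BN.MF Q T' x * BN.MF Q (insert i R) x) :
    (∑ x ∈ BN.Sec x₀ T', Real.sqrt (BN.MF P T' x * BN.MF Q T' x))
      + (∑ x ∈ BN.Sec x₀ (insert i R),
          Real.sqrt (BN.MF P (insert i R) x * BN.MF Q (insert i R) x)) - 1
      ≤ ∑ x ∈ BN.Sec x₀ (insert i T'),
          Real.sqrt (BN.MF P (insert i T') x * BN.MF Q (insert i T') x) := by
  set T : Finset ι := insert i T' with hTdef
  set U : Finset ι := insert i R with hUdef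
  have hiR : i ∉ R := fun h => hiT' (hRT' h)
  have hRT : R ⊆ T := hRT'.trans (Finset.subset_insert _ _)
  have hRU : R ⊆ U := Finset.subset_insert _ _
  rw [BN.sum_fiber_decomp x₀ hRT (fun x => Real.sqrt (BN.MF P T x * BN.MF Q T x)),
    BN.sum_fiber_decomp x₀ hRT' (fun x => Real.sqrt (BN.MF P T' x * BN.MF Q T' x)),
    BN.sum_fiber_decomp x₀ hRU (fun x => Real.sqrt (BN.MF P U x * BN.MF Q U x))]
  have hrsum : ∑ w ∈ BN.Sec x₀ R, Real.sqrt (BN.MF P R w * BN.MF Q R w) ≤ 1 := by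
    have h := BN.sum_sqrt_mul_le (BN.Sec x₀ R) (BN.MF P R) (BN.MF Q R)
      (fun k _ => BN.MF_nonneg hP0 R k) (fun k _ => BN.MF_nonneg hQ0 R k)
    rw [BN.sum_MF_Sec P x₀ R, BN.sum_MF_Sec Q x₀ R, hP1, hQ1] at h
    simpa using h
  have key : ∀ w ∈ BN.Sec x₀ R,
      (∑ x ∈ (BN.Sec x₀ T').filter (fun x => ∀ j ∈ R, x j = w j),
          Real.sqrt (BN.MF P T' x * BN.MF Q T' x))
        + (∑ x ∈ (BN.Sec x₀ U).filter (fun x => ∀ j ∈ R, x j = w j),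
            Real.sqrt (BN.MF P U x * BN.MF Q U x))
        - Real.sqrt (BN.MF P R w * BN.MF Q R w)
        ≤ ∑ x ∈ (BN.Sec x₀ T).filter (fun x => ∀ j ∈ R, x j = w j),
            Real.sqrt (BN.MF P T x * BN.MF Q T x) := by
    intro w hw
    have hrw : Real.sqrt (BN.MF P R w * BN.MF Q R w)
        = Real.sqrt (BN.MF P R w) * Real.sqrt (BN.MF Q R w) :=
      Real.sqrt_mul (BN.MF_nonneg hP0 R w) _
    have hfb : (∑ x ∈ (BN.Sec x₀ T').filter (fun x => ∀ j ∈ R, x j = w j),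
        Real.sqrt (BN.MF P T' x * BN.MF Q T' x))
        ≤ Real.sqrt (BN.MF P R w * BN.MF Q R w) := by
      have h1 := BN.sum_sqrt_mul_le ((BN.Sec x₀ T').filter (fun x => ∀ j ∈ R, x j = w j))
        (BN.MF P T') (BN.MF Q T') (fun k _ => BN.MF_nonneg hP0 T' k)
        (fun k _ => BN.MF_nonneg hQ0 T' k)
      rw [BN.sum_MF_fiber P x₀ hRT' w, BN.sum_MF_fiber Q x₀ hRT' w] at h1
      rw [hrw]
      exact h1
    have hgb : (∑ x ∈ (BN.Sec x₀ U).filter (fun x => ∀ j ∈ R, x j = w j),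
        Real.sqrt (BN.MF P U x * BN.MF Q U x))
        ≤ Real.sqrt (BN.MF P R w * BN.MF Q R w) := by
      have h1 := BN.sum_sqrt_mul_le ((BN.Sec x₀ U).filter (fun x => ∀ j ∈ R, x j = w j))
        (BN.MF P U) (BN.MF Q U) (fun k _ => BN.MF_nonneg hP0 U k)
        (fun k _ => BN.MF_nonneg hQ0 U k)
      rw [BN.sum_MF_fiber P x₀ hRU w, BN.sum_MF_fiber Q x₀ hRU w] at h1
      rw [hrw]
      exact h1
    have hprod : (∑ x ∈ (BN.Sec x₀ T).filter (fun x => ∀ j ∈ R, x j = w j),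
        Real.sqrt (BN.MF P T x * BN.MF Q T x)) * Real.sqrt (BN.MF P R w * BN.MF Q R w)
        = (∑ x ∈ (BN.Sec x₀ T').filter (fun x => ∀ j ∈ R, x j = w j),
            Real.sqrt (BN.MF P T' x * BN.MF Q T' x))
          * (∑ x ∈ (BN.Sec x₀ U).filter (fun x => ∀ j ∈ R, x j = w j),
              Real.sqrt (BN.MF P U x * BN.MF Q U x)) := by
      have e1 : ∀ x ∈ (BN.Sec x₀ T).filter (fun x => ∀ j ∈ R, x j = w j),
          Real.sqrt (BN.MF P T x * BN.MF Q T x) * Real.sqrt (BN.MF P R w * BN.MF Q R w)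
            = Real.sqrt (BN.MF P T' x * BN.MF Q T' x)
              * Real.sqrt (BN.MF P U x * BN.MF Q U x) := by
        intro x hx
        have hxw : ∀ j ∈ R, x j = w j := (Finset.mem_filter.1 hx).2
        have hrx : BN.MF P R w * BN.MF Q R w = BN.MF P R x * BN.MF Q R x := by
          rw [BN.MF_congr (P := P) (T := R) fun j hj => (hxw j hj).symm,
            BN.MF_congr (P := Q) (T := R) fun j hj => (hxw j hj).symm]
        rw [hrx,
          ← Real.sqrt_mul (mul_nonneg (BN.MF_nonneg hP0 T x) (BN.MF_nonneg hQ0 T x)),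
          ← Real.sqrt_mul (mul_nonneg (BN.MF_nonneg hP0 T' x) (BN.MF_nonneg hQ0 T' x))]
        congr 1
        linear_combination (BN.MF Q T x * BN.MF Q R x) * hPf x
          + (BN.MF P T' x * BN.MF P U x) * hQf x
      have e2 : ∑ x ∈ (BN.Sec x₀ T).filter (fun x => ∀ j ∈ R, x j = w j),
          Real.sqrt (BN.MF P T' x * BN.MF Q T' x) * Real.sqrt (BN.MF P U x * BN.MF Q U x)
          = ∑ p ∈ ((BN.Sec x₀ T').filter (fun x => ∀ j ∈ R, x j = w j)) ×ˢ
              ((BN.Sec x₀ U).filter (fun x => ∀ j ∈ R, x j = w j)),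
              Real.sqrt (BN.MF P T' p.1 * BN.MF Q T' p.1)
                * Real.sqrt (BN.MF P U p.2 * BN.MF Q U p.2) := by
        refine Finset.sum_bij'
          (fun x _ => (Function.update x i (x₀ i), Function.update w i (x i)))
          (fun p _ => Function.update p.1 i (p.2 i)) ?_ ?_ ?_ ?_ ?_
        · intro x hx
          obtain ⟨hxs, hxw⟩ := Finset.mem_filter.1 hx
          have hxsec := BN.mem_Sec.1 hxs
          rw [Finset.mem_product]
          constructor
          · rw [Finset.mem_filter, BN.mem_Sec]
            refine ⟨fun j hj => ?_, fun j hj => ?_⟩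
            · dsimp only
              by_cases hji : j = i
              · subst hji; rw [Function.update_self]
              · rw [Function.update_of_ne hji]
                exact hxsec j (by simp [hTdef, hji, hj])
            · dsimp only
              have hji : j ≠ i := fun h => hiR (h ▸ hj)
              rw [Function.update_of_ne hji]
              exact hxw j hj
          · rw [Finset.mem_filter, BN.mem_Sec]
            refine ⟨fun j hj => ?_, fun j hj => ?_⟩
            · dsimp only
              have hji : j ≠ i := fun h => hj (by simp [hUdef, h])
              have hjR : j ∉ R := fun h => hj (by simp [hUdef, h])
              rw [Function.update_of_ne hji]
              exact BN.mem_Sec.1 hw j hjR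
            · dsimp only
              have hji : j ≠ i := fun h => hiR (h ▸ hj)
              rw [Function.update_of_ne hji]
        · rintro ⟨z, u⟩ hp
          rw [Finset.mem_product] at hp
          obtain ⟨hp1, hp2⟩ := hp
          dsimp only at hp1 hp2 ⊢
          obtain ⟨hz, hzw⟩ := Finset.mem_filter.1 hp1
          rw [Finset.mem_filter, BN.mem_Sec]
          refine ⟨fun j hj => ?_, fun j hj => ?_⟩
          · have hji : j ≠ i := fun h => hj (by simp [hTdef, h])
            have hjT' : j ∉ T' := fun h => hj (by simp [hTdef, h])
            rw [Function.update_of_ne hji]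
            exact BN.mem_Sec.1 hz j hjT'
          · have hji : j ≠ i := fun h => hiR (h ▸ hj)
            rw [Function.update_of_ne hji]
            exact hzw j hj
        · intro x hx
          dsimp only
          simp only [Function.update_self, Function.update_idem, Function.update_eq_self]
        · rintro ⟨z, u⟩ hp
          rw [Finset.mem_product] at hp
          obtain ⟨hp1, hp2⟩ := hp
          dsimp only at hp1 hp2 ⊢
          obtain ⟨hz, hzw⟩ := Finset.mem_filter.1 hp1
          obtain ⟨hu, huw⟩ := Finset.mem_filter.1 hp2
          have hz0 : z i = x₀ i := BN.mem_Sec.1 hz i hiT'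
          simp only [Prod.mk.injEq]
          constructor
          · rw [Function.update_idem, ← hz0, Function.update_eq_self]
          · rw [Function.update_self]
            funext j
            by_cases hji : j = i
            · subst hji; rw [Function.update_self]
            · rw [Function.update_of_ne hji]
              by_cases hjR : j ∈ R
              · exact (huw j hjR).symm
              · have hjU : j ∉ U := by simp [hUdef, hji, hjR]
                rw [BN.mem_Sec.1 hw j hjR, BN.mem_Sec.1 hu j hjU]
        · intro x hx
          obtain ⟨hxs, hxw⟩ := Finset.mem_filter.1 hx
          dsimp only
          have e3P : BN.MF P T' x = BN.MF P T' (Function.update x i (x₀ i)) := by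
            refine BN.MF_congr fun j hj => ?_
            have hji : j ≠ i := fun h => hiT' (h ▸ hj)
            rw [Function.update_of_ne hji]
          have e3Q : BN.MF Q T' x = BN.MF Q T' (Function.update x i (x₀ i)) := by
            refine BN.MF_congr fun j hj => ?_
            have hji : j ≠ i := fun h => hiT' (h ▸ hj)
            rw [Function.update_of_ne hji]
          have hc : ∀ j ∈ U, x j = Function.update w i (x i) j := by
            intro j hj
            by_cases hji : j = i
            · subst hji; rw [Function.update_self]
            · rw [Function.update_of_ne hji]
              have hjR : j ∈ R := by
                rcases Finset.mem_insert.1 (hUdef ▸ hj) with h | h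
                · exact absurd h hji
                · exact h
              exact hxw j hjR
          have e4P : BN.MF P U x = BN.MF P U (Function.update w i (x i)) :=
            BN.MF_congr hc
          have e4Q : BN.MF Q U x = BN.MF Q U (Function.update w i (x i)) :=
            BN.MF_congr hc
          rw [e3P, e3Q, e4P, e4Q]
      calc (∑ x ∈ (BN.Sec x₀ T).filter (fun x => ∀ j ∈ R, x j = w j),
              Real.sqrt (BN.MF P T x * BN.MF Q T x)) * Real.sqrt (BN.MF P R w * BN.MF Q R w)
          = ∑ x ∈ (BN.Sec x₀ T).filter (fun x => ∀ j ∈ R, x j = w j),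
              Real.sqrt (BN.MF P T' x * BN.MF Q T' x)
                * Real.sqrt (BN.MF P U x * BN.MF Q U x) := by
            rw [Finset.sum_mul]
            exact Finset.sum_congr rfl e1
        _ = ∑ p ∈ ((BN.Sec x₀ T').filter (fun x => ∀ j ∈ R, x j = w j)) ×ˢ
              ((BN.Sec x₀ U).filter (fun x => ∀ j ∈ R, x j = w j)),
              Real.sqrt (BN.MF P T' p.1 * BN.MF Q T' p.1)
                * Real.sqrt (BN.MF P U p.2 * BN.MF Q U p.2) := e2
        _ = ∑ z ∈ (BN.Sec x₀ T').filter (fun x => ∀ j ∈ R, x j = w j),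
              ∑ u ∈ (BN.Sec x₀ U).filter (fun x => ∀ j ∈ R, x j = w j),
                Real.sqrt (BN.MF P T' z * BN.MF Q T' z)
                  * Real.sqrt (BN.MF P U u * BN.MF Q U u) := Finset.sum_product _ _ _
        _ = _ := (Finset.sum_mul_sum _ _ _ _).symm
    exact BN.key_ineq (Finset.sum_nonneg fun x _ => Real.sqrt_nonneg _)
      (Finset.sum_nonneg fun x _ => Real.sqrt_nonneg _)
      (Finset.sum_nonneg fun x _ => Real.sqrt_nonneg _) hfb hgb hprod
  have hsum := Finset.sum_le_sum key
  rw [Finset.sum_sub_distrib, Finset.sum_add_distrib] at hsum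
  linarith
end BNStep

section BNFinal
open scoped Classical
variable {ι : Type*} [Fintype ι] [DecidableEq ι] {α : ι → Type*} [∀ i, Fintype (α i)]

lemma BN.MF_ext (P : (∀ i, α i) → ℝ) (x₀ : ∀ i, α i) (T : Finset ι) (y : (j : T) → α j) :
    BN.MF P T (fun j => if h : j ∈ T then y ⟨j, h⟩ else x₀ j) = marg P T y := by
  simp only [BN.MF]
  congr 1
  funext j
  exact dif_pos j.2

lemma BN.sum_marg_eq (P Q : (∀ i, α i) → ℝ) (x₀ : ∀ i, α i) (T : Finset ι) :
    ∑ y : (j : T) → α j, Real.sqrt (marg P T y * marg Q T y)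
      = ∑ x ∈ BN.Sec x₀ T, Real.sqrt (BN.MF P T x * BN.MF Q T x) := by
  refine Finset.sum_bij'
    (fun y _ => fun j => if h : j ∈ T then y ⟨j, h⟩ else x₀ j)
    (fun x _ => fun j => x j.1) ?_ ?_ ?_ ?_ ?_
  · intro y _
    rw [BN.mem_Sec]
    intro j hj
    rw [dif_neg hj]
  · intro x _
    exact Finset.mem_univ _
  · intro y _
    funext j
    dsimp only
    rw [dif_pos j.2]
  · intro x hx
    funext j
    dsimp only
    by_cases hj : j ∈ T
    · rw [dif_pos hj]
    · rw [dif_neg hj]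
      exact (BN.mem_Sec.1 hx j hj).symm
  · intro y _
    rw [BN.MF_ext P x₀ T y, BN.MF_ext Q x₀ T y]

lemma BN.MF_univ (P : (∀ i, α i) → ℝ) (x : ∀ i, α i) : BN.MF P Finset.univ x = P x := by
  rw [BN.MF_apply]
  rw [Finset.sum_eq_single_of_mem x (Finset.mem_univ x)]
  · rw [if_pos fun j _ => rfl]
  · intro z _ hne
    rw [if_neg]
    intro h
    exact hne (funext fun j => h j (Finset.mem_univ j))

lemma BN.Sec_univ (x₀ : ∀ i, α i) : BN.Sec x₀ (Finset.univ : Finset ι) = Finset.univ := by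
  ext x
  simp [BN.Sec]

end BNFinal


/-- **Squared Hellinger subadditivity for Bayesian networks (common DAG).**
`P` and `Q` are joint distributions on `n = m + 1` finitely-valued variables with a
common Bayes-net structure on a topologically ordered DAG, where `Par i ⊆ {0,…,i-1}`
is the set of parents of node `i`. The factorization is expressed equivalently via
marginals: for each `i ≠ 0`, the marginal on `{0,…,i}` times the marginal on `Par i`
equals the marginal on `{0,…,i-1}` times the marginal on `{i} ∪ Par i`, pointwise.
(Note `Par 0 = ∅` is forced, so the `i = 0` summand is `H²(P_{X_0},Q_{X_0})`.) Then
`H²(P,Q) ≤ ∑ i, H²(P_{X_i, X_{Par i}}, Q_{X_i, X_{Par i}})`;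
in particular, if `H²(P,Q) ≥ ε` then there exists `i` with
`H²(P_{X_i, X_{Par i}}, Q_{X_i, X_{Par i}}) ≥ ε / n`. -/
theorem sqHellinger_subadditive_bayes_net
    {m : ℕ} (α : Fin (m + 1) → Type*) [∀ i, Fintype (α i)]
    (Par : Fin (m + 1) → Finset (Fin (m + 1)))
    (hPar : ∀ i, Par i ⊆ Finset.Iio i)
    (P Q : (∀ i, α i) → ℝ)
    (hP0 : ∀ x, 0 ≤ P x) (hP1 : ∑ x, P x = 1)
    (hQ0 : ∀ x, 0 ≤ Q x) (hQ1 : ∑ x, Q x = 1)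
    (hPfac : ∀ i : Fin (m + 1), i ≠ 0 → ∀ x : ∀ j, α j,
      marg P (Finset.Iic i) (fun j => x j.1) * marg P (Par i) (fun j => x j.1) =
        marg P (Finset.Iio i) (fun j => x j.1) *
          marg P (insert i (Par i)) (fun j => x j.1))
    (hQfac : ∀ i : Fin (m + 1), i ≠ 0 → ∀ x : ∀ j, α j,
      marg Q (Finset.Iic i) (fun j => x j.1) * marg Q (Par i) (fun j => x j.1) =
        marg Q (Finset.Iio i) (fun j => x j.1) *
          marg Q (insert i (Par i)) (fun j => x j.1)) :
    sqHellinger P Q ≤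
        ∑ i : Fin (m + 1),
          sqHellinger (marg P (insert i (Par i))) (marg Q (insert i (Par i))) ∧
      ∀ ε : ℝ, sqHellinger P Q ≥ ε →
        ∃ i : Fin (m + 1),
          sqHellinger (marg P (insert i (Par i))) (marg Q (insert i (Par i))) ≥
            ε / (m + 1 : ℝ) := by
  have hne : Nonempty (∀ j, α j) := by
    by_contra h
    rw [not_nonempty_iff] at h
    rw [Finset.univ_eq_empty, Finset.sum_empty] at hP1
    exact one_ne_zero hP1.symm
  obtain ⟨x₀⟩ := hne
  set σ : Finset (Fin (m + 1)) → ℝ :=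
    fun T => ∑ x ∈ BN.Sec x₀ T, Real.sqrt (BN.MF P T x * BN.MF Q T x) with hσ
  have hH : ∀ T : Finset (Fin (m + 1)),
      sqHellinger (marg P T) (marg Q T) = 1 - σ T := by
    intro T
    rw [sqHellinger]
    simp only [hσ]
    rw [BN.sum_marg_eq P Q x₀ T]
  have hPar0 : Par 0 = ∅ := by
    have h := hPar 0
    rwa [show Finset.Iio (0 : Fin (m + 1)) = ∅ by
      ext j; simp, Finset.subset_empty] at h
  have hIic0 : Finset.Iic (0 : Fin (m + 1)) = {0} := by
    ext j
    simp [Fin.le_zero_iff]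
  have main : ∀ k : ℕ, ∀ hk : k < m + 1,
      (∑ j ∈ Finset.Iic (⟨k, hk⟩ : Fin (m + 1)), σ (insert j (Par j))) - (k : ℝ)
        ≤ σ (Finset.Iic (⟨k, hk⟩ : Fin (m + 1))) := by
    intro k
    induction k with
    | zero =>
      intro hk
      have h0 : (⟨0, hk⟩ : Fin (m + 1)) = 0 := rfl
      rw [h0, hIic0, Finset.sum_singleton, hPar0]
      simp
    | succ k ih =>
      intro hk
      have hk' : k < m + 1 := Nat.lt_of_succ_lt hk
      have hiv : ((⟨k + 1, hk⟩ : Fin (m + 1)) : ℕ) = k + 1 := rfl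
      have hi'v : ((⟨k, hk'⟩ : Fin (m + 1)) : ℕ) = k := rfl
      have hIio : Finset.Iio (⟨k + 1, hk⟩ : Fin (m + 1)) = Finset.Iic (⟨k, hk'⟩ : Fin (m + 1)) := by
        ext j
        simp only [Finset.mem_Iio, Finset.mem_Iic, Fin.lt_def, Fin.le_def, hiv, hi'v]
        omega
      have hIic2 : insert (⟨k + 1, hk⟩ : Fin (m + 1)) (Finset.Iio (⟨k + 1, hk⟩ : Fin (m + 1)))
          = Finset.Iic (⟨k + 1, hk⟩ : Fin (m + 1)) := by
        ext j
        simp only [Finset.mem_insert, Finset.mem_Iio, Finset.mem_Iic, Fin.lt_def, Fin.le_def,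
          Fin.ext_iff, hiv]
        omega
      have hnot : (⟨k + 1, hk⟩ : Fin (m + 1)) ∉ Finset.Iic (⟨k, hk'⟩ : Fin (m + 1)) := by
        simp only [Finset.mem_Iic, Fin.le_def, hiv, hi'v]
        omega
      have hi0 : (⟨k + 1, hk⟩ : Fin (m + 1)) ≠ 0 := by
        simp only [ne_eq, Fin.ext_iff, hiv, Fin.val_zero]
        omega
      have hiIio : (⟨k + 1, hk⟩ : Fin (m + 1)) ∉ Finset.Iio (⟨k + 1, hk⟩ : Fin (m + 1)) := by
        simp
      have hPf' : ∀ x : ∀ j, α j,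
          BN.MF P (insert (⟨k + 1, hk⟩ : Fin (m + 1)) (Finset.Iio (⟨k + 1, hk⟩ : Fin (m + 1)))) x
              * BN.MF P (Par ⟨k + 1, hk⟩) x
            = BN.MF P (Finset.Iio (⟨k + 1, hk⟩ : Fin (m + 1))) x
              * BN.MF P (insert (⟨k + 1, hk⟩ : Fin (m + 1)) (Par ⟨k + 1, hk⟩)) x := by
        intro x
        rw [hIic2]
        exact hPfac ⟨k + 1, hk⟩ hi0 x
      have hQf' : ∀ x : ∀ j, α j,
          BN.MF Q (insert (⟨k + 1, hk⟩ : Fin (m + 1)) (Finset.Iio (⟨k + 1, hk⟩ : Fin (m + 1)))) x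
              * BN.MF Q (Par ⟨k + 1, hk⟩) x
            = BN.MF Q (Finset.Iio (⟨k + 1, hk⟩ : Fin (m + 1))) x
              * BN.MF Q (insert (⟨k + 1, hk⟩ : Fin (m + 1)) (Par ⟨k + 1, hk⟩)) x := by
        intro x
        rw [hIic2]
        exact hQfac ⟨k + 1, hk⟩ hi0 x
      have hstep := BN.step P Q hP0 hQ0 hP1 hQ1 x₀ hiIio (hPar ⟨k + 1, hk⟩) hPf' hQf'
      have hstep' : σ (Finset.Iio (⟨k + 1, hk⟩ : Fin (m + 1)))
          + σ (insert (⟨k + 1, hk⟩ : Fin (m + 1)) (Par ⟨k + 1, hk⟩)) - 1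
          ≤ σ (insert (⟨k + 1, hk⟩ : Fin (m + 1)) (Finset.Iio (⟨k + 1, hk⟩ : Fin (m + 1)))) := by
        simp only [hσ]
        exact hstep
      rw [hIic2, hIio] at hstep'
      have hihk := ih hk'
      have hsum_eq : (∑ j ∈ Finset.Iic (⟨k + 1, hk⟩ : Fin (m + 1)), σ (insert j (Par j)))
          = σ (insert (⟨k + 1, hk⟩ : Fin (m + 1)) (Par ⟨k + 1, hk⟩))
            + ∑ j ∈ Finset.Iic (⟨k, hk'⟩ : Fin (m + 1)), σ (insert j (Par j)) := by
        rw [show Finset.Iic (⟨k + 1, hk⟩ : Fin (m + 1))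
            = insert (⟨k + 1, hk⟩ : Fin (m + 1)) (Finset.Iic (⟨k, hk'⟩ : Fin (m + 1))) by
          rw [← hIic2, hIio], Finset.sum_insert hnot]
      rw [hsum_eq]
      push_cast
      linarith
  have hlastlt : m < m + 1 := Nat.lt_succ_self m
  have hlast := main m hlastlt
  have huniv : Finset.Iic (⟨m, hlastlt⟩ : Fin (m + 1)) = Finset.univ := by
    ext j
    simp only [Finset.mem_Iic, Finset.mem_univ, iff_true, Fin.le_def]
    exact Nat.lt_succ_iff.mp j.isLt
  rw [huniv] at hlast
  have hσuniv : σ Finset.univ = ∑ x, Real.sqrt (P x * Q x) := by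
    simp only [hσ]
    rw [BN.Sec_univ]
    exact Finset.sum_congr rfl fun x _ => by rw [BN.MF_univ, BN.MF_univ]
  have part1 : sqHellinger P Q ≤
      ∑ i : Fin (m + 1),
        sqHellinger (marg P (insert i (Par i))) (marg Q (insert i (Par i))) := by
    rw [show (∑ i : Fin (m + 1),
        sqHellinger (marg P (insert i (Par i))) (marg Q (insert i (Par i))))
        = ∑ i : Fin (m + 1), (1 - σ (insert i (Par i))) from
      Finset.sum_congr rfl fun i _ => hH _]
    rw [Finset.sum_sub_distrib, Finset.sum_const, Finset.card_univ, Fintype.card_fin,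
      nsmul_eq_mul, mul_one, sqHellinger, ← hσuniv]
    push_cast
    linarith
  refine ⟨part1, ?_⟩
  intro ε hε
  have hc : ((m : ℝ) + 1) ≠ 0 := by positivity
  have hconst : ∑ _i : Fin (m + 1), (ε / ((m : ℝ) + 1)) = ε := by
    rw [Finset.sum_const, Finset.card_univ, Fintype.card_fin, nsmul_eq_mul]
    push_cast
    field_simp
  have h3 : ∑ _i : Fin (m + 1), (ε / ((m : ℝ) + 1))
      ≤ ∑ i : Fin (m + 1),
          sqHellinger (marg P (insert i (Par i))) (marg Q (insert i (Par i))) := by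
    rw [hconst]
    exact le_trans hε part1
  obtain ⟨i, -, hi⟩ := Finset.exists_le_of_sum_le Finset.univ_nonempty h3
  exact ⟨i, hi⟩
end
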